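/- arXiv:2208.01073 — 5 statements merged into one kernel-verified Lean document; each statement's English description precedes it below -/
import Mathlib

section
/- The set of idempotents of the monoid M of block matrices [[1_k, B],[0, T]] (B ∈ Mat_{k,m}(ℂ), T diagonal) is closed under multiplication; that is, M is an orthodox semigroup. -/
/-- The product of two idempotents of the block monoid
(matrices `[[1, B],[0, T]]` with `T` diagonal) is again an idempotent; i.e. the
monoid is an orthodox semigroup. -/
theorem stmt9 (k m : ℕ) (B B' : Matrix (Fin k) (Fin m) ℂ) (d d' : Fin m → ℂ)
    (hX : (Matrix.fromBlocks (1 : Matrix (Fin k) (Fin k) ℂ) B 0 (Matrix.diagonal d) :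
        Matrix (Fin k ⊕ Fin m) (Fin k ⊕ Fin m) ℂ) *
      Matrix.fromBlocks (1 : Matrix (Fin k) (Fin k) ℂ) B 0 (Matrix.diagonal d) = Matrix.fromBlocks (1 : Matrix (Fin k) (Fin k) ℂ) B 0 (Matrix.diagonal d))
    (hY : (Matrix.fromBlocks (1 : Matrix (Fin k) (Fin k) ℂ) B' 0 (Matrix.diagonal d') :
        Matrix (Fin k ⊕ Fin m) (Fin k ⊕ Fin m) ℂ) *
      Matrix.fromBlocks (1 : Matrix (Fin k) (Fin k) ℂ) B' 0 (Matrix.diagonal d') =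
        Matrix.fromBlocks (1 : Matrix (Fin k) (Fin k) ℂ) B' 0 (Matrix.diagonal d')) :
    (Matrix.fromBlocks (1 : Matrix (Fin k) (Fin k) ℂ) B 0 (Matrix.diagonal d) * Matrix.fromBlocks (1 : Matrix (Fin k) (Fin k) ℂ) B' 0 (Matrix.diagonal d') :
        Matrix (Fin k ⊕ Fin m) (Fin k ⊕ Fin m) ℂ) *
      (Matrix.fromBlocks (1 : Matrix (Fin k) (Fin k) ℂ) B 0 (Matrix.diagonal d) *
        Matrix.fromBlocks (1 : Matrix (Fin k) (Fin k) ℂ) B' 0 (Matrix.diagonal d')) =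
    Matrix.fromBlocks (1 : Matrix (Fin k) (Fin k) ℂ) B 0 (Matrix.diagonal d) *
      Matrix.fromBlocks (1 : Matrix (Fin k) (Fin k) ℂ) B' 0 (Matrix.diagonal d') := by
  simp only [Matrix.fromBlocks_multiply, Matrix.one_mul, Matrix.mul_one, Matrix.mul_zero,
    Matrix.zero_mul, add_zero, zero_add, Matrix.fromBlocks_inj, Matrix.diagonal_mul_diagonal,
    true_and] at *
  obtain ⟨hBd, hd⟩ := hX
  obtain ⟨hB'd', hd'⟩ := hY
  have hBd0 : B * Matrix.diagonal d = 0 := by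
    have := congrArg (· - B) hBd; simpa using this
  have hB'd'0 : B' * Matrix.diagonal d' = 0 := by
    have := congrArg (· - B') hB'd'; simpa using this
  have hdf : (fun i => d i * d i) = d := Matrix.diagonal_injective hd
  have hd'f : (fun i => d' i * d' i) = d' := Matrix.diagonal_injective hd'
  have hdd : (fun i => (fun i => d i * d' i) i * (fun i => d i * d' i) i) = fun i => d i * d' i := by
    funext i
    have h1 := congrFun hdf i
    have h2 := congrFun hd'f i
    simp only at h1 h2 ⊢
    calc d i * d' i * (d i * d' i) = (d i * d i) * (d' i * d' i) := by ring
    _ = d i * d' i := by rw [h1, h2]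
  refine ⟨?_, by rw [hdd]⟩
  have h1 : B' * Matrix.diagonal (fun i => d i * d' i) = 0 := by
    have e : (fun i => d i * d' i) = fun i => d' i * d i := by funext i; ring
    rw [e, ← Matrix.diagonal_mul_diagonal, ← Matrix.mul_assoc, hB'd'0, Matrix.zero_mul]
  have h2 : B * Matrix.diagonal d' * Matrix.diagonal (fun i => d i * d' i) = 0 := by
    rw [Matrix.mul_assoc, Matrix.diagonal_mul_diagonal]
    have e : (fun i => d' i * (d i * d' i)) = fun i => d i * (d' i * d' i) := by
      funext i; ring
    rw [e, ← Matrix.diagonal_mul_diagonal, ← Matrix.mul_assoc, hBd0, Matrix.zero_mul]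
  rw [Matrix.add_mul, h1, h2, add_zero, add_zero]
end

section
/- Let E and F be diagonal m×m idempotents, and let P(E) denote the set of idempotents [[1_k, B],[0, E]] in M (i.e. with B·E = 0). Then the setwise product P(E)·P(F) equals P(E·F), where E·F is the diagonal idempotent with (EF)_{ii} = E_{ii}·F_{ii}. -/
open Pointwise

/-! Multiplying out, `[[1, B], [0, E]] * [[1, C], [0, F]] = [[1, C + B F], [0, E F]]`, and when `E`
and `F` commute, `C F = 0` and `B E = 0` give `(C + B F) E F = 0`. Conversely, if `F² = F` then
`[[1, B], [0, E F]] = [[1, B F], [0, E]] * [[1, B - B F], [0, F]]`. -/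

namespace Matrix

/-- The paper's `P(D)`. -/
def blockIdempotents (k : Type*) {m R : Type*} [Fintype m] [DecidableEq k] [Semiring R]
    (D : Matrix m m R) : Set (Matrix (k ⊕ m) (k ⊕ m) R) :=
  {X | ∃ B : Matrix k m R, B * D = 0 ∧ X = fromBlocks 1 B 0 D}

variable {k m R : Type*} [Fintype k] [Fintype m] [DecidableEq k]

theorem fromBlocks_one_mul_fromBlocks_one [Semiring R] (B C : Matrix k m R) (D D' : Matrix m m R) :
    fromBlocks (1 : Matrix k k R) B 0 D * fromBlocks (1 : Matrix k k R) C 0 D' =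
      fromBlocks 1 (C + B * D') 0 (D * D') := by
  simp [fromBlocks_multiply]

theorem blockIdempotents_mul_subset [Semiring R] {E F : Matrix m m R} (hEF : Commute E F) :
    blockIdempotents k E * blockIdempotents k F ⊆ blockIdempotents k (E * F) := by
  rintro _ ⟨_, ⟨B, hBE, rfl⟩, _, ⟨C, hCF, rfl⟩, rfl⟩
  refine ⟨C + B * F, ?_, fromBlocks_one_mul_fromBlocks_one B C E F⟩
  have hFEF : F * (E * F) = E * (F * F) := by rw [← mul_assoc, ← hEF.eq, mul_assoc]
  calc (C + B * F) * (E * F) = C * (F * E) + B * (E * (F * F)) := by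
        rw [Matrix.add_mul, Matrix.mul_assoc B, hFEF, hEF.eq]
    _ = 0 := by rw [← Matrix.mul_assoc, hCF, ← Matrix.mul_assoc, hBE]; simp

theorem blockIdempotents_mul_supset [Ring R] {E F : Matrix m m R} (hEF : Commute E F)
    (hF : IsIdempotentElem F) :
    blockIdempotents k (E * F) ⊆ blockIdempotents k E * blockIdempotents k F := by
  rintro _ ⟨B, hB, rfl⟩
  refine ⟨_, ⟨B * F, ?_, rfl⟩, _, ⟨B - B * F, ?_, rfl⟩, ?_⟩
  · rw [Matrix.mul_assoc, ← hEF.eq, hB]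
  · rw [Matrix.sub_mul, Matrix.mul_assoc, hF.eq, sub_self]
  · dsimp only
    rw [fromBlocks_one_mul_fromBlocks_one, Matrix.mul_assoc, hF.eq, sub_add_cancel]

theorem blockIdempotents_mul [Ring R] {E F : Matrix m m R} (hEF : Commute E F)
    (hF : IsIdempotentElem F) :
    blockIdempotents k E * blockIdempotents k F = blockIdempotents k (E * F) :=
  (blockIdempotents_mul_subset hEF).antisymm (blockIdempotents_mul_supset hEF hF)

end Matrix

theorem stmt10_general (k m : ℕ) (e f : Fin m → ℂ)
    (hf : ∀ i, f i = 0 ∨ f i = 1) :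
    ({X | ∃ B : Matrix (Fin k) (Fin m) ℂ, B * Matrix.diagonal e = 0 ∧
        X = Matrix.fromBlocks 1 B 0 (Matrix.diagonal e)} :
      Set (Matrix (Fin k ⊕ Fin m) (Fin k ⊕ Fin m) ℂ)) *
    {X | ∃ B : Matrix (Fin k) (Fin m) ℂ, B * Matrix.diagonal f = 0 ∧
        X = Matrix.fromBlocks 1 B 0 (Matrix.diagonal f)} =
    {X | ∃ B : Matrix (Fin k) (Fin m) ℂ, B * Matrix.diagonal (fun i => e i * f i) = 0 ∧
        X = Matrix.fromBlocks 1 B 0 (Matrix.diagonal (fun i => e i * f i))} := by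
  have hF : IsIdempotentElem (Matrix.diagonal f) := by
    rw [IsIdempotentElem, Matrix.diagonal_mul_diagonal]
    congr 1
    funext i
    rcases hf i with h | h <;> simp [h]
  have h := Matrix.blockIdempotents_mul (k := Fin k) (Matrix.commute_diagonal e f) hF
  rwa [Matrix.diagonal_mul_diagonal] at h

/-- For diagonal idempotents `E = diagonal e` and `F = diagonal f`,
the setwise product `P(E) * P(F)` of the corresponding sets of block idempotents
`[[1, B],[0, D]]` (with `B * D = 0`) equals `P(E * F)`. -/
theorem stmt10 (k m : ℕ) (e f : Fin m → ℂ)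
    (he : ∀ i, e i = 0 ∨ e i = 1) (hf : ∀ i, f i = 0 ∨ f i = 1) :
    ({X | ∃ B : Matrix (Fin k) (Fin m) ℂ, B * Matrix.diagonal e = 0 ∧
        X = Matrix.fromBlocks 1 B 0 (Matrix.diagonal e)} :
      Set (Matrix (Fin k ⊕ Fin m) (Fin k ⊕ Fin m) ℂ)) *
    {X | ∃ B : Matrix (Fin k) (Fin m) ℂ, B * Matrix.diagonal f = 0 ∧
        X = Matrix.fromBlocks 1 B 0 (Matrix.diagonal f)} =
    {X | ∃ B : Matrix (Fin k) (Fin m) ℂ, B * Matrix.diagonal (fun i => e i * f i) = 0 ∧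
        X = Matrix.fromBlocks 1 B 0 (Matrix.diagonal (fun i => e i * f i))} :=
  stmt10_general k m e f hf
end

section
/- Let G be the group of invertible block matrices [[1_k, B],[0, T]] with T diagonal invertible, and let E = [[1_k, C],[0, D]] be an idempotent (D diagonal idempotent, C·D = 0). Then the orbit {g·E·g⁻¹ : g ∈ G} equals the set of all idempotents [[1_k, B],[0, D]] with B·D = 0; i.e., two idempotents of this form are G-conjugate if and only if they have the same diagonal block D. -/
/-!
Conjugation by `[[1, B], [0, T]]` preserves the shape `[[1, *], [0, *]]` and replaces the
diagonal block `D` by `T D T⁻¹ = D`, since diagonal matrices commute. A matrix `[[1, B'], [0, D]]`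
is idempotent iff `B' D = 0` and `D² = D`, and conjugates of idempotents are idempotent; this
gives one inclusion. Conversely, with `T = 1` and `B = C - B'` the conjugate of
`[[1, C], [0, D]]` is `[[1, B' + C D - B' D], [0, D]] = [[1, B'], [0, D]]`.
-/

open Matrix

theorem IsIdempotentElem.units_conj {M : Type*} [Monoid M] {e : M} (he : IsIdempotentElem e)
    (u : Mˣ) : IsIdempotentElem (↑u * e * ↑u⁻¹) := by
  rw [IsIdempotentElem]
  calc ↑u * e * ↑u⁻¹ * (↑u * e * ↑u⁻¹) = ↑u * (e * e) * ↑u⁻¹ := by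
        simp only [mul_assoc, Units.inv_mul_cancel_left]
    _ = ↑u * e * ↑u⁻¹ := by rw [he.eq]

namespace Matrix

variable {k m R : Type*} [Fintype k] [Fintype m] [DecidableEq k] [Ring R]

theorem fromBlocks_one_zero_mul (B B' : Matrix k m R) (D D' : Matrix m m R) :
    fromBlocks (1 : Matrix k k R) B 0 D * fromBlocks (1 : Matrix k k R) B' 0 D' =
      fromBlocks 1 (B' + B * D') 0 (D * D') := by
  simp [fromBlocks_multiply, add_comm]

theorem isIdempotentElem_fromBlocks_one_zero_iff {B : Matrix k m R} {D : Matrix m m R} :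
    IsIdempotentElem (fromBlocks (1 : Matrix k k R) B 0 D) ↔ B * D = 0 ∧ IsIdempotentElem D := by
  rw [IsIdempotentElem, fromBlocks_one_zero_mul, fromBlocks_inj]
  simp [IsIdempotentElem]

variable [DecidableEq m]

def fromBlocksOneZeroUnit (B : Matrix k m R) (T : (Matrix m m R)ˣ) :
    (Matrix (k ⊕ m) (k ⊕ m) R)ˣ where
  val := fromBlocks 1 B 0 T
  inv := fromBlocks 1 (-(B * (↑T⁻¹ : Matrix m m R))) 0 ↑T⁻¹
  val_inv := by simp [fromBlocks_one_zero_mul, fromBlocks_one]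
  inv_val := by simp [fromBlocks_one_zero_mul, fromBlocks_one, Matrix.mul_assoc]

theorem coe_fromBlocksOneZeroUnit (B : Matrix k m R) (T : (Matrix m m R)ˣ) :
    (fromBlocksOneZeroUnit B T : Matrix (k ⊕ m) (k ⊕ m) R) = fromBlocks 1 B 0 T :=
  rfl

theorem coe_fromBlocksOneZeroUnit_inv (B : Matrix k m R) (T : (Matrix m m R)ˣ) :
    (↑(fromBlocksOneZeroUnit B T)⁻¹ : Matrix (k ⊕ m) (k ⊕ m) R) =
      fromBlocks 1 (-(B * (↑T⁻¹ : Matrix m m R))) 0 ↑T⁻¹ :=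
  rfl

theorem fromBlocksOneZeroUnit_conj (B C : Matrix k m R) (T : (Matrix m m R)ˣ) (D : Matrix m m R) :
    (fromBlocksOneZeroUnit B T : Matrix (k ⊕ m) (k ⊕ m) R) * fromBlocks 1 C 0 D *
        (↑(fromBlocksOneZeroUnit B T)⁻¹ : Matrix (k ⊕ m) (k ⊕ m) R) =
      fromBlocks 1 ((C + B * D - B) * (↑T⁻¹ : Matrix m m R)) 0
        ((T : Matrix m m R) * D * (↑T⁻¹ : Matrix m m R)) := by
  rw [coe_fromBlocksOneZeroUnit, coe_fromBlocksOneZeroUnit_inv, fromBlocks_one_zero_mul,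
    fromBlocks_one_zero_mul, Matrix.sub_mul, neg_add_eq_sub]

end Matrix

/-- Let `G` be the group of invertible block matrices `[[1, B],[0, T]]`
with `T` diagonal invertible, and let `E = [[1, C],[0, D]]` be an idempotent
(`D` a diagonal idempotent, `C * D = 0`).  The conjugation orbit `{g E g⁻¹ : g ∈ G}`
is exactly the set of all idempotents `[[1, B],[0, D]]` with `B * D = 0`. -/
theorem stmt11 (k m : ℕ) (C : Matrix (Fin k) (Fin m) ℂ) (d : Fin m → ℂ)
    (hd : ∀ i, d i = 0 ∨ d i = 1) (hC : C * Matrix.diagonal d = 0) :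
    {X : Matrix (Fin k ⊕ Fin m) (Fin k ⊕ Fin m) ℂ |
        ∃ g : (Matrix (Fin k ⊕ Fin m) (Fin k ⊕ Fin m) ℂ)ˣ,
          (∃ (B : Matrix (Fin k) (Fin m) ℂ) (t : Fin m → ℂ), (∀ i, t i ≠ 0) ∧
            (g : Matrix (Fin k ⊕ Fin m) (Fin k ⊕ Fin m) ℂ) =
              Matrix.fromBlocks 1 B 0 (Matrix.diagonal t)) ∧
          X = (g : Matrix (Fin k ⊕ Fin m) (Fin k ⊕ Fin m) ℂ) *
            Matrix.fromBlocks 1 C 0 (Matrix.diagonal d) *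
            ((g⁻¹ : (Matrix (Fin k ⊕ Fin m) (Fin k ⊕ Fin m) ℂ)ˣ) :
              Matrix (Fin k ⊕ Fin m) (Fin k ⊕ Fin m) ℂ)} =
    {X | ∃ B : Matrix (Fin k) (Fin m) ℂ, B * Matrix.diagonal d = 0 ∧
        X = Matrix.fromBlocks 1 B 0 (Matrix.diagonal d)} := by
  have hD : IsIdempotentElem (diagonal d) :=
    IsIdempotentElem.map (f := diagonalRingHom (Fin m) ℂ)
      (funext fun i => (IsIdempotentElem.iff_eq_zero_or_one.mpr (hd i)).eq)
  have hE := isIdempotentElem_fromBlocks_one_zero_iff.mpr ⟨hC, hD⟩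
  ext X
  constructor
  · rintro ⟨g, ⟨B, t, ht, hg⟩, rfl⟩
    obtain ⟨T, hT⟩ : IsUnit (diagonal t) :=
      isUnit_diagonal.mpr (Pi.isUnit_iff.mpr fun i => (ht i).isUnit)
    obtain rfl : g = fromBlocksOneZeroUnit B T := Units.ext (by rw [hg, ← hT]; rfl)
    have hTD : (T : Matrix (Fin m) (Fin m) ℂ) * diagonal d * (↑T⁻¹ : Matrix (Fin m) (Fin m) ℂ) =
        diagonal d := by
      rw [hT, (commute_diagonal t d).eq, ← hT, Units.mul_inv_cancel_right]
    have hX := hE.units_conj (fromBlocksOneZeroUnit B T)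
    rw [fromBlocksOneZeroUnit_conj, hTD] at hX ⊢
    exact ⟨_, (isIdempotentElem_fromBlocks_one_zero_iff.mp hX).1, rfl⟩
  · rintro ⟨B, hB, rfl⟩
    refine ⟨fromBlocksOneZeroUnit (C - B) 1, ⟨C - B, 1, fun _ => one_ne_zero, ?_⟩, ?_⟩
    · rw [coe_fromBlocksOneZeroUnit, Units.val_one, ← diagonal_one]
      rfl
    · rw [fromBlocksOneZeroUnit_conj, Units.val_one, inv_one, Units.val_one, Matrix.mul_one,
        Matrix.one_mul, Matrix.mul_one, Matrix.sub_mul, hC, hB]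
      congr 1
      abel
end

section
/- Let D be a diagonal m×m idempotent of rank r and E = [[1_k, 0],[0, D]]. Then the group E·G·E (with identity E) is isomorphic as a group to the group of block matrices [[1_k, B'],[0, T']] with B' ∈ Mat_{k,r}(ℂ) and T' an invertible diagonal r×r matrix. -/
/-!
Let `e : Fin r ↪ Fin m` enumerate the support `{i | d i = 1}` of `D`. An element
`[[1, B], [0, diagonal t]]` of `E G E` has `B` and `t` vanishing off the range of `e`, so the
matrix itself vanishes outside the rows and columns indexed by the range of `f = Sum.map id e`.
Hence taking the submatrix along `f` loses no information, is multiplicative (the entries of a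
product only involve the surviving indices), and is inverted by extending `B'` and `t'` by zero.
-/

open Function Set Matrix

namespace Matrix

theorem submatrix_mul_of_forall_notMem_range {l n o κ l' o' R : Type*} [Fintype n] [Fintype κ]
    [NonUnitalNonAssocSemiring R] {f : κ → n} (hf : Injective f) (M : Matrix l n R)
    (N : Matrix n o R) (hM : ∀ i j, j ∉ range f → M i j = 0) (e₁ : l' → l) (e₃ : o' → o) :
    (M * N).submatrix e₁ e₃ = M.submatrix e₁ f * N.submatrix f e₃ :=
  ext fun _ _ => (Fintype.sum_of_injective f hf _ _
    (fun j hj => by simp [hM _ j hj]) fun _ => rfl).symm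

theorem submatrix_injOn {m n κ κ' R : Type*} [Zero R] (f : κ → m) (g : κ' → n) :
    InjOn (fun M : Matrix m n R => M.submatrix f g)
      {M | ∀ i j, M i j ≠ 0 → i ∈ range f ∧ j ∈ range g} := by
  intro M hM N hN h
  ext i j
  by_cases hij : i ∈ range f ∧ j ∈ range g
  · obtain ⟨⟨a, rfl⟩, ⟨b, rfl⟩⟩ := hij
    exact congrFun (congrFun h a) b
  · rw [not_not.mp (mt (hM i j) hij), not_not.mp (mt (hN i j) hij)]

theorem fromBlocks_submatrix_sumMap {l m n o l' m' n' o' R : Type*} (A : Matrix n l R)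
    (B : Matrix n m R) (C : Matrix o l R) (D : Matrix o m R) (f₁ : n' → n) (f₂ : o' → o)
    (g₁ : l' → l) (g₂ : m' → m) :
    (fromBlocks A B C D).submatrix (Sum.map f₁ f₂) (Sum.map g₁ g₂) =
      fromBlocks (A.submatrix f₁ g₁) (B.submatrix f₁ g₂) (C.submatrix f₂ g₁)
        (D.submatrix f₂ g₂) := by
  ext (i | i) (j | j) <;> rfl

theorem mul_diagonal_eq_self_iff {l n R : Type*} [Fintype n] [DecidableEq n] [Semiring R]
    {d : n → R} (hd : ∀ i, d i = 0 ∨ d i = 1) (B : Matrix l n R) :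
    B * diagonal d = B ↔ ∀ p i, d i = 0 → B p i = 0 := by
  constructor
  · intro h p i hi
    rw [← h, mul_diagonal, hi, mul_zero]
  · intro h
    ext p i
    rcases hd i with hi | hi
    · rw [mul_diagonal, hi, mul_zero, h p i hi]
    · rw [mul_diagonal, hi, mul_one]

section UnitriangularBlocks

variable {k n κ R : Type*} [DecidableEq k] [DecidableEq n] [Zero R] [One R]

theorem fromBlocks_one_diagonal_submatrix [DecidableEq κ] (e : κ ↪ n) (B : Matrix k n R)
    (t : n → R) :
    (fromBlocks (1 : Matrix k k R) B 0 (diagonal t)).submatrix (Sum.map id e) (Sum.map id e) =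
      fromBlocks 1 (B.submatrix id e) 0 (diagonal (t ∘ e)) := by
  simp [fromBlocks_submatrix_sumMap]

theorem mem_range_of_fromBlocks_one_diagonal_ne_zero (e : κ ↪ n) {B : Matrix k n R} {t : n → R}
    (hB : ∀ p i, i ∉ range e → B p i = 0) (ht : ∀ i ∉ range e, t i = 0) :
    ∀ a b, fromBlocks (1 : Matrix k k R) B 0 (diagonal t) a b ≠ 0 →
      a ∈ range (Sum.map id e) ∧ b ∈ range (Sum.map id e) := by
  have hinr : ∀ i, Sum.inr i ∈ range (Sum.map (id : k → k) e) ↔ i ∈ range e := by simp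
  rintro (p | i) (q | j) h
  · exact ⟨⟨.inl p, rfl⟩, ⟨.inl q, rfl⟩⟩
  · refine ⟨⟨.inl p, rfl⟩, (hinr j).2 ?_⟩
    exact not_not.mp (mt (hB p j) h)
  · exact absurd rfl h
  · obtain rfl : i = j := by
      by_contra hij
      exact h (diagonal_apply_ne t hij)
    have hi : i ∈ range e := not_not.mp fun hi => h (by simp [ht i hi])
    exact ⟨(hinr i).2 hi, (hinr i).2 hi⟩

theorem fromBlocks_one_diagonal_extend_submatrix [DecidableEq κ] (e : κ ↪ n) (B' : Matrix k κ R)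
    (t' : κ → R) :
    (fromBlocks (1 : Matrix k k R) (of fun p => extend e (B' p) 0) 0
      (diagonal (extend e t' 0))).submatrix (Sum.map id e) (Sum.map id e) =
        fromBlocks 1 B' 0 (diagonal t') := by
  rw [fromBlocks_one_diagonal_submatrix, extend_comp e.injective]
  congr 1
  ext p j
  exact e.injective.extend_apply _ _ _

end UnitriangularBlocks

end Matrix

theorem Set.exists_embedding_fin_range_eq {α : Type*} [Finite α] {s : Set α} {r : ℕ}
    (hs : s.ncard = r) : ∃ e : Fin r ↪ α, range e = s := by
  let ε := Finite.equivFinOfCardEq (by rwa [Nat.card_coe_set_eq] : Nat.card s = r)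
  refine ⟨ε.symm.toEmbedding.trans (Embedding.subtype _), ?_⟩
  change range (Subtype.val ∘ ε.symm) = s
  rw [EquivLike.range_comp, Subtype.range_coe]

/-- For a diagonal idempotent `D = diagonal d` of rank `r` and
`E = [[1, 0],[0, D]]`, the group `E G E` (inside the block monoid, with identity `E`)
is isomorphic, via a multiplicative bijection, to the group of block matrices
`[[1, B'],[0, T']]` with `B' ∈ Mat_{k,r}(ℂ)` and `T'` an invertible diagonal `r × r`
matrix. -/
theorem stmt13 (k m r : ℕ) (d : Fin m → ℂ) (hd : ∀ i, d i = 0 ∨ d i = 1)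
    (hr : Set.ncard {i | d i = 1} = r) :
    ∃ φ : Matrix (Fin k ⊕ Fin m) (Fin k ⊕ Fin m) ℂ →
        Matrix (Fin k ⊕ Fin r) (Fin k ⊕ Fin r) ℂ,
      Set.BijOn φ
        {X | ∃ (B : Matrix (Fin k) (Fin m) ℂ) (t : Fin m → ℂ),
          B * Matrix.diagonal d = B ∧ (∀ i, d i = 1 → t i ≠ 0) ∧ (∀ i, d i = 0 → t i = 0) ∧
          X = Matrix.fromBlocks 1 B 0 (Matrix.diagonal t)}
        {Y | ∃ (B' : Matrix (Fin k) (Fin r) ℂ) (t' : Fin r → ℂ), (∀ i, t' i ≠ 0) ∧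
          Y = Matrix.fromBlocks 1 B' 0 (Matrix.diagonal t')} ∧
      ∀ X ∈ {X | ∃ (B : Matrix (Fin k) (Fin m) ℂ) (t : Fin m → ℂ),
          B * Matrix.diagonal d = B ∧ (∀ i, d i = 1 → t i ≠ 0) ∧ (∀ i, d i = 0 → t i = 0) ∧
          X = Matrix.fromBlocks 1 B 0 (Matrix.diagonal t)},
        ∀ Y ∈ {X | ∃ (B : Matrix (Fin k) (Fin m) ℂ) (t : Fin m → ℂ),
          B * Matrix.diagonal d = B ∧ (∀ i, d i = 1 → t i ≠ 0) ∧ (∀ i, d i = 0 → t i = 0) ∧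
          X = Matrix.fromBlocks 1 B 0 (Matrix.diagonal t)},
        φ (X * Y) = φ X * φ Y := by
  obtain ⟨e, he⟩ := Set.exists_embedding_fin_range_eq hr
  have hone : ∀ i, d i = 1 ↔ i ∈ range e := fun i => by rw [he]; rfl
  have hzero : ∀ i, d i = 0 ↔ i ∉ range e := fun i => by
    rcases hd i with h | h <;> simp [← hone, h]
  have hsupp : ∀ (B : Matrix (Fin k) (Fin m) ℂ) t, B * diagonal d = B →
      (∀ i, d i = 0 → t i = 0) → ∀ a b, fromBlocks 1 B 0 (diagonal t) a b ≠ 0 →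
        a ∈ range (Sum.map id e) ∧ b ∈ range (Sum.map id e) := fun B t hB ht =>
    mem_range_of_fromBlocks_one_diagonal_ne_zero e
      (fun p i hi => (mul_diagonal_eq_self_iff hd B).1 hB p i ((hzero i).2 hi))
      (fun i hi => ht i ((hzero i).2 hi))
  refine ⟨fun X => X.submatrix (Sum.map id e) (Sum.map id e), ⟨?_, ?_, ?_⟩, ?_⟩
  · rintro _ ⟨B, t, -, ht, -, rfl⟩
    exact ⟨_, _, fun j => ht _ ((hone _).2 (mem_range_self j)),
      fromBlocks_one_diagonal_submatrix e B t⟩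
  · rintro _ ⟨B, t, hB, -, ht, rfl⟩ _ ⟨C, s, hC, -, hs, rfl⟩ h
    exact submatrix_injOn _ _ (hsupp B t hB ht) (hsupp C s hC hs) h
  · rintro _ ⟨B', t', ht', rfl⟩
    have hext : ∀ (g : Fin r → ℂ) i, d i = 0 → extend e g 0 i = 0 :=
      fun g i hi => extend_apply' _ _ _ ((hzero i).1 hi)
    refine ⟨fromBlocks 1 (of fun p => extend e (B' p) 0) 0 (diagonal (extend e t' 0)),
      ⟨_, _, ?_, ?_, fun i => hext t' i, rfl⟩, ?_⟩
    · exact (mul_diagonal_eq_self_iff hd _).2 fun p i => hext (B' p) i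
    · rintro _ hi
      obtain ⟨j, rfl⟩ := (hone _).1 hi
      rw [e.injective.extend_apply]
      exact ht' j
    · exact fromBlocks_one_diagonal_extend_submatrix e B' t'
  · rintro _ ⟨B, t, hB, -, ht, rfl⟩ _ -
    exact submatrix_mul_of_forall_notMem_range (injective_id.sumMap e.injective) _ _
      (fun a b hb => not_not.mp fun h => hb (hsupp B t hB ht a b h).2) _ _
end

section
/- In the monoid M of block matrices [[1_k, B],[0, T]] (B ∈ Mat_{k,m}(ℂ), T diagonal), any two idempotents X and Y are o-conjugate: there exist Z, W ∈ M with X·Z = Z·Y and Y·W = W·X. Indeed Z = [[1_k, B_Y],[0, 0]] and W = [[1_k, B_X],[0, 0]] work, where B_X, B_Y are the upper-right blocks of X and Y. -/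
/-! The upper-right block of the square of `[[1, B], [0, D]]` is `B + B * D`, so idempotency forces
`B * D = 0`. Then `Z = [[1, B_Y], [0, 0]]` absorbs `Y` on the right, while `X * Z = Z` holds for
every `X` of the block form, whence `X * Z = Z = Z * Y`; symmetrically for `W`. -/

namespace Matrix

variable {l m R : Type*} [Fintype l] [Fintype m] [DecidableEq l]

section Ring

variable [Ring R]

theorem mul_eq_zero_of_isIdempotentElem_fromBlocks_one {B : Matrix l m R} {D : Matrix m m R}
    (h : IsIdempotentElem (fromBlocks (1 : Matrix l l R) B 0 D)) : B * D = 0 := by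
  have h₁₂ := congrArg toBlocks₁₂ h.eq
  simp only [fromBlocks_multiply, toBlocks_fromBlocks₁₂, Matrix.one_mul, Matrix.zero_mul] at h₁₂
  exact add_eq_left.mp h₁₂

end Ring

section Semiring

variable [Semiring R]

theorem fromBlocks_one_mul_fromBlocks_one_zero (B B' : Matrix l m R) (D : Matrix m m R) :
    fromBlocks 1 B 0 D * fromBlocks 1 B' 0 0 = fromBlocks (1 : Matrix l l R) B' 0 0 := by
  simp [fromBlocks_multiply]

theorem fromBlocks_one_zero_mul_fromBlocks_one {B : Matrix l m R} {D : Matrix m m R}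
    (h : B * D = 0) :
    fromBlocks 1 B 0 0 * fromBlocks 1 B 0 D = fromBlocks (1 : Matrix l l R) B 0 0 := by
  simp [fromBlocks_multiply, h]

end Semiring

end Matrix

open Matrix in
/-- Any two idempotents `X = [[1, B_X],[0, D_X]]` and
`Y = [[1, B_Y],[0, D_Y]]` of the block monoid are `o`-conjugate: with
`Z = [[1, B_Y],[0, 0]]` and `W = [[1, B_X],[0, 0]]` one has `X Z = Z Y` and
`Y W = W X`. -/
theorem stmt17 (k m : ℕ) (BX BY : Matrix (Fin k) (Fin m) ℂ) (dX dY : Fin m → ℂ)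
    (hX : (Matrix.fromBlocks (1 : Matrix (Fin k) (Fin k) ℂ) BX 0 (Matrix.diagonal dX) :
        Matrix (Fin k ⊕ Fin m) (Fin k ⊕ Fin m) ℂ) *
      Matrix.fromBlocks (1 : Matrix (Fin k) (Fin k) ℂ) BX 0 (Matrix.diagonal dX) =
        Matrix.fromBlocks (1 : Matrix (Fin k) (Fin k) ℂ) BX 0 (Matrix.diagonal dX))
    (hY : (Matrix.fromBlocks (1 : Matrix (Fin k) (Fin k) ℂ) BY 0 (Matrix.diagonal dY) :
        Matrix (Fin k ⊕ Fin m) (Fin k ⊕ Fin m) ℂ) *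
      Matrix.fromBlocks (1 : Matrix (Fin k) (Fin k) ℂ) BY 0 (Matrix.diagonal dY) =
        Matrix.fromBlocks (1 : Matrix (Fin k) (Fin k) ℂ) BY 0 (Matrix.diagonal dY)) :
    (Matrix.fromBlocks (1 : Matrix (Fin k) (Fin k) ℂ) BX 0 (Matrix.diagonal dX) :
        Matrix (Fin k ⊕ Fin m) (Fin k ⊕ Fin m) ℂ) * Matrix.fromBlocks (1 : Matrix (Fin k) (Fin k) ℂ) BY 0 0 =
      Matrix.fromBlocks (1 : Matrix (Fin k) (Fin k) ℂ) BY 0 0 * Matrix.fromBlocks (1 : Matrix (Fin k) (Fin k) ℂ) BY 0 (Matrix.diagonal dY) ∧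
    (Matrix.fromBlocks (1 : Matrix (Fin k) (Fin k) ℂ) BY 0 (Matrix.diagonal dY) :
        Matrix (Fin k ⊕ Fin m) (Fin k ⊕ Fin m) ℂ) * Matrix.fromBlocks (1 : Matrix (Fin k) (Fin k) ℂ) BX 0 0 =
      Matrix.fromBlocks (1 : Matrix (Fin k) (Fin k) ℂ) BX 0 0 * Matrix.fromBlocks (1 : Matrix (Fin k) (Fin k) ℂ) BX 0 (Matrix.diagonal dX) := by
  rw [fromBlocks_one_mul_fromBlocks_one_zero, fromBlocks_one_mul_fromBlocks_one_zero,
    fromBlocks_one_zero_mul_fromBlocks_one (mul_eq_zero_of_isIdempotentElem_fromBlocks_one hY),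
    fromBlocks_one_zero_mul_fromBlocks_one (mul_eq_zero_of_isIdempotentElem_fromBlocks_one hX)]
  exact ⟨rfl, rfl⟩
end
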